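/- arXiv:1312.7406 — 5 statements merged into one kernel-verified Lean document; each statement's English description precedes it below -/
import Mathlib

section
/- In D = ℚ[x², x³] with τ defined by equality of degree, the polynomial f(x) = x⁸ − x⁹ has, up to associates and rearrangement, exactly one τ-atomic factorization, namely f(x) = (x² − x³)·x³·x³. -/
/-- `a` is a nonzero nonunit, i.e. an element of `D^#`. -/
def NzNonunit {D : Type*} [CommRing D] (a : D) : Prop := a ≠ 0 ∧ ¬ IsUnit a

/-- `l` is the list of factors of a `τ`-factorization of `a`:
`a = λ * l.prod` for a unit `λ`, the factors are nonzero nonunits and pairwise `τ`-related. -/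
def TauFact {D : Type*} [CommRing D] (τ : D → D → Prop) (l : List D) (a : D) : Prop :=
  l ≠ [] ∧ (∀ b ∈ l, NzNonunit b) ∧ l.Pairwise τ ∧ ∃ u : Dˣ, a = (u : D) * l.prod

/-- `b` τ-divides `a`: `b` occurs as a factor in some τ-factorization of `a`. -/
def TauDvd {D : Type*} [CommRing D] (τ : D → D → Prop) (b a : D) : Prop :=
  ∃ l, TauFact τ l a ∧ b ∈ l

/-- `a` is τ-irreducible (a τ-atom): all its τ-factorizations are trivial. -/
def TauIrred {D : Type*} [CommRing D] (τ : D → D → Prop) (a : D) : Prop :=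
  NzNonunit a ∧ ∀ l, TauFact τ l a → l.length = 1

/-- `l` is a τ-atomic factorization of `a`. -/
def TauAtomicFact {D : Type*} [CommRing D] (τ : D → D → Prop) (l : List D) (a : D) : Prop :=
  TauFact τ l a ∧ ∀ b ∈ l, TauIrred τ b

/-- `D` is τ-atomic: every nonzero nonunit has a τ-atomic factorization. -/
def TauAtomic {D : Type*} [CommRing D] (τ : D → D → Prop) : Prop :=
  ∀ a : D, NzNonunit a → ∃ l, TauAtomicFact τ l a

def TauSymm {D : Type*} [CommRing D] (τ : D → D → Prop) : Prop :=
  ∀ a b, τ a b → τ b a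

/-- τ is associate preserving. -/
def TauAssocPres {D : Type*} [CommRing D] (τ : D → D → Prop) : Prop :=
  ∀ a b b' : D, τ a b → Associated b b' → τ a b'

/-- τ is refinable: replacing each factor of a τ-factorization by a
τ-factorization of it again yields a τ-factorization. -/
def TauRefinable {D : Type*} [CommRing D] (τ : D → D → Prop) : Prop :=
  ∀ (a : D) (l : List D) (F : List (List D)),
    TauFact τ l a → List.Forall₂ (fun b m => TauFact τ m b) l F →
    TauFact τ F.flatten a

/-- `a` is a vertex of the τ-irreducible divisor graph `G_τ(x)`. -/
def GVert {D : Type*} [CommRing D] (τ : D → D → Prop) (x a : D) : Prop :=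
  TauIrred τ a ∧ TauDvd τ a x

/-- `a` and `b` are adjacent (distinct, i.e. non-associated, vertices joined by an edge)
in `G_τ(x)`: some τ-factorization of `x` contains associates of both. -/
def GAdj {D : Type*} [CommRing D] (τ : D → D → Prop) (x a b : D) : Prop :=
  GVert τ x a ∧ GVert τ x b ∧ ¬ Associated a b ∧
  ∃ l, TauFact τ l x ∧ (∃ a' ∈ l, Associated a a') ∧ (∃ b' ∈ l, Associated b b')

/-- `G_τ(x)` is connected (vertices are taken up to associates). -/
def GConnected {D : Type*} [CommRing D] (τ : D → D → Prop) (x : D) : Prop :=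
  ∀ a b, GVert τ x a → GVert τ x b →
    Relation.ReflTransGen (fun u v => GAdj τ x u v ∨ Associated u v) a b

/-- The reduced graph `G̅_τ(x)` (loops deleted) is connected; loops do not affect
connectivity, so this is connectivity with respect to the same adjacency relation. -/
def GBarConnected {D : Type*} [CommRing D] (τ : D → D → Prop) (x : D) : Prop :=
  ∀ a b, GVert τ x a → GVert τ x b →
    Relation.ReflTransGen (fun u v => GAdj τ x u v ∨ Associated u v) a b

/-- `G_τ(x)` is a pseudoclique: any two non-associated vertices are adjacent.
(Equivalently, the reduced graph `G̅_τ(x)` is a clique / complete graph.) -/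
def GPseudoclique {D : Type*} [CommRing D] (τ : D → D → Prop) (x : D) : Prop :=
  ∀ a b, GVert τ x a → GVert τ x b → ¬ Associated a b → GAdj τ x a b

/-- `Diam(G_τ(x)) ≤ 1`: any two vertices are equal (associated) or adjacent. -/
def GDiamLeOne {D : Type*} [CommRing D] (τ : D → D → Prop) (x : D) : Prop :=
  ∀ a b, GVert τ x a → GVert τ x b → Associated a b ∨ GAdj τ x a b

/-- `G_τ(x)` has finitely many vertices (up to associates). -/
def GVertFinite {D : Type*} [CommRing D] (τ : D → D → Prop) (x : D) : Prop :=
  ∃ s : Finset D, ∀ a, GVert τ x a → ∃ c ∈ s, Associated a c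

/-- The vertex `a` of `G_τ(x)` has finite degree: finitely many adjacent vertices
up to associates (loops not counted). -/
def GDegFinite {D : Type*} [CommRing D] (τ : D → D → Prop) (x a : D) : Prop :=
  ∃ s : Finset D, ∀ b, GAdj τ x a b → ∃ c ∈ s, Associated b c

/-- The vertex `a` of `G_τ(x)` carries finitely many loops: there is a uniform bound on
the number of occurrences of associates of `a` in τ-atomic factorizations of `x`. -/
def GLoopsFinite {D : Type*} [CommRing D] (τ : D → D → Prop) (x a : D) : Prop :=
  ∃ N : ℕ, ∀ l m : List D, TauAtomicFact τ l x → m.Sublist l →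
    (∀ b ∈ m, Associated a b) → m.length ≤ N

/-- `D` satisfies τ-ACCP. -/
def TauACCP {D : Type*} [CommRing D] (τ : D → D → Prop) : Prop :=
  ∀ a : ℕ → D, (∀ i, TauDvd τ (a (i + 1)) (a i)) →
    ∃ N, ∀ i, N ≤ i → Associated (a i) (a N)

/-- `D` is a τ-UFD. -/
def TauUFD {D : Type*} [CommRing D] (τ : D → D → Prop) : Prop :=
  TauAtomic τ ∧ ∀ (x : D) (l₁ l₂ : List D), TauAtomicFact τ l₁ x → TauAtomicFact τ l₂ x →
    Multiset.Rel Associated (l₁ : Multiset D) (l₂ : Multiset D)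

/-- `D` is a τ-FFD: each nonzero nonunit has only finitely many τ-factorizations
up to rearrangement and associates. -/
def TauFFD {D : Type*} [CommRing D] (τ : D → D → Prop) : Prop :=
  ∀ x : D, NzNonunit x → ∃ S : Finset (Multiset D),
    ∀ l : List D, TauFact τ l x → ∃ m ∈ S, Multiset.Rel Associated (l : Multiset D) m

/-- `D` is a τ-WFFD: each nonzero nonunit has finitely many τ-divisors up to associates. -/
def TauWFFD {D : Type*} [CommRing D] (τ : D → D → Prop) : Prop :=
  ∀ x : D, NzNonunit x → ∃ s : Finset D,
    ∀ b, TauDvd τ b x → ∃ c ∈ s, Associated b c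

/-- `D` is a τ-idf domain: each nonzero nonunit has finitely many τ-irreducible
τ-divisors up to associates. -/
def TauIdf {D : Type*} [CommRing D] (τ : D → D → Prop) : Prop :=
  ∀ x : D, NzNonunit x → ∃ s : Finset D,
    ∀ b, TauIrred τ b → TauDvd τ b x → ∃ c ∈ s, Associated b c



open Polynomial

/-- `D = QQ[x^2,x^3]`, the subring of `QQ[X]` generated by `X^2` and `X^3`. -/
noncomputable abbrev Qx2x3 : Subalgebra ℚ (Polynomial ℚ) :=
  Algebra.adjoin ℚ ({X ^ 2, X ^ 3} : Set (Polynomial ℚ))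

/-- The degree relation: `g τ g'` iff `deg g = deg g'`. -/
def degRel (g g' : Qx2x3) : Prop := (g : Polynomial ℚ).natDegree = (g' : Polynomial ℚ).natDegree

/-!
No element of `ℚ[x², x³]` has a linear term, so its nonzero nonunits have degree at least 2,
and a τ-factorization into `n` factors of common degree `d` has degree `n * d`. Since
`9 = 1 * 9 = 3 * 3` and the trivial factorization of `f` is refined by `(x² - x³) * x³ * x³`,
a τ-atomic factorization of `f` consists of three cubics. A cubic has at most three roots among
`0` and `1` counted with multiplicity, while the three factors share the nine roots of
`x⁸ (1 - x)`; hence every factor is `c x³` or `c x² (x - 1)`, and exactly one is of the second kind.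
-/

section ListProd

variable {R : Type*} [CommRing R] [IsDomain R]

theorem Polynomial.natDegree_list_prod {l : List R[X]} (hl : (0 : R[X]) ∉ l) :
    l.prod.natDegree = (l.map natDegree).sum := by
  simpa using natDegree_multiset_prod (l : Multiset R[X]) (by simpa using hl)

theorem Polynomial.rootMultiplicity_list_prod {l : List R[X]} (hl : (0 : R[X]) ∉ l) (a : R) :
    l.prod.rootMultiplicity a = (l.map (rootMultiplicity a)).sum := by
  induction l with
  | nil => simp
  | cons p l ih =>
    rw [List.mem_cons, not_or] at hl
    rw [List.prod_cons,
      rootMultiplicity_mul (mul_ne_zero (Ne.symm hl.1) (List.prod_ne_zero hl.2)), ih hl.2,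
      List.map_cons, List.sum_cons]

end ListProd

section TwoRoots

variable {K : Type*} [Field K] {a b : K}

theorem Polynomial.X_sub_C_pow_mul_X_sub_C_pow_dvd (hab : a ≠ b) (p : K[X]) :
    (X - C a) ^ p.rootMultiplicity a * (X - C b) ^ p.rootMultiplicity b ∣ p :=
  ((isCoprime_X_sub_C_of_isUnit_sub (sub_ne_zero.2 hab).isUnit).pow).mul_dvd
    (pow_rootMultiplicity_dvd p a) (pow_rootMultiplicity_dvd p b)

theorem Polynomial.natDegree_X_sub_C_pow_mul_X_sub_C_pow (m n : ℕ) :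
    ((X - C a) ^ m * (X - C b) ^ n).natDegree = m + n := by
  rw [natDegree_mul (pow_ne_zero _ (X_sub_C_ne_zero a)) (pow_ne_zero _ (X_sub_C_ne_zero b)),
    natDegree_pow, natDegree_pow, natDegree_X_sub_C, natDegree_X_sub_C, mul_one, mul_one]

theorem Polynomial.rootMultiplicity_add_rootMultiplicity_le_natDegree (hab : a ≠ b) {p : K[X]}
    (hp : p ≠ 0) : p.rootMultiplicity a + p.rootMultiplicity b ≤ p.natDegree := by
  simpa only [natDegree_X_sub_C_pow_mul_X_sub_C_pow] using
    natDegree_le_of_dvd (X_sub_C_pow_mul_X_sub_C_pow_dvd hab p) hp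

theorem Polynomial.eq_C_leadingCoeff_mul_of_rootMultiplicity_add_eq_natDegree (hab : a ≠ b)
    {p : K[X]} (h : p.rootMultiplicity a + p.rootMultiplicity b = p.natDegree) :
    p = C p.leadingCoeff *
      ((X - C a) ^ p.rootMultiplicity a * (X - C b) ^ p.rootMultiplicity b) :=
  eq_leadingCoeff_mul_of_monic_of_dvd_of_natDegree_le (((monic_X_sub_C a).pow _).mul
    ((monic_X_sub_C b).pow _)) (X_sub_C_pow_mul_X_sub_C_pow_dvd hab p)
    (by rw [natDegree_X_sub_C_pow_mul_X_sub_C_pow, h])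

end TwoRoots

theorem TauFact.of_associated {D : Type*} [CommRing D] {τ : D → D → Prop} {l : List D}
    {x y : D} (h : TauFact τ l x) (hxy : Associated x y) : TauFact τ l y := by
  obtain ⟨hne, hnz, hτ, u, rfl⟩ := h
  obtain ⟨v, rfl⟩ := hxy
  exact ⟨hne, hnz, hτ, u * v, by push_cast; ring⟩

section Subalgebra

variable {K : Type*} [Field K] {S : Subalgebra K K[X]}

theorem associated_of_coe_eq_C_mul {b b' : S} {c : K} (hc : c ≠ 0)
    (h : (b : K[X]) = C c * b') : Associated b b' := by
  have hb : b = algebraMap K S c * b' := Subtype.ext (by simpa [algebraMap_eq] using h)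
  rw [hb, mul_comm]
  exact associated_mul_unit_left _ _ ((isUnit_iff_ne_zero.2 hc).map _)

theorem nzNonunit_of_natDegree_coe_ne_zero {b : S} (h : (b : K[X]).natDegree ≠ 0) :
    NzNonunit b :=
  ⟨by rintro rfl; simp at h, fun hu => h (natDegree_eq_zero_of_isUnit (hu.map S.val))⟩

theorem isUnit_of_natDegree_coe_eq_zero {b : S} (hb : b ≠ 0) (h : (b : K[X]).natDegree = 0) :
    IsUnit b := by
  have hc : (b : K[X]).coeff 0 ≠ 0 := by
    simpa [leadingCoeff, h] using leadingCoeff_ne_zero.2 (S.coe_eq_zero.not.2 hb)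
  have hb' : b = algebraMap K S ((b : K[X]).coeff 0) :=
    Subtype.ext (by simpa [algebraMap_eq] using eq_C_of_natDegree_eq_zero h)
  exact hb' ▸ (isUnit_iff_ne_zero.2 hc).map _

theorem TauFact.exists_coe_eq_C_mul_prod {τ : S → S → Prop} {l : List S} {x : S}
    (h : TauFact τ l x) : ∃ r : K, r ≠ 0 ∧ (x : K[X]) = C r * (l.map Subtype.val).prod := by
  obtain ⟨-, -, -, u, rfl⟩ := h
  obtain ⟨r, hr, hru⟩ := Polynomial.isUnit_iff.1 (u.isUnit.map S.val)
  exact ⟨r, hr.ne_zero, by simp [hru]⟩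

theorem TauFact.zero_notMem_map_val {τ : S → S → Prop} {l : List S} {x : S}
    (h : TauFact τ l x) : (0 : K[X]) ∉ l.map Subtype.val := fun h0 => by
  obtain ⟨b, hb, hb0⟩ := List.mem_map.1 h0
  exact (h.2.1 b hb).1 (Subtype.ext hb0)

theorem TauFact.natDegree_coe {τ : S → S → Prop} {l : List S} {x : S} (h : TauFact τ l x) :
    (x : K[X]).natDegree = (l.map fun b : S => (b : K[X]).natDegree).sum := by
  obtain ⟨r, hr, hx⟩ := h.exists_coe_eq_C_mul_prod
  rw [hx, natDegree_C_mul hr, natDegree_list_prod h.zero_notMem_map_val, List.map_map]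
  rfl

theorem TauFact.rootMultiplicity_coe {τ : S → S → Prop} {l : List S} {x : S} (h : TauFact τ l x)
    (a : K) :
    (x : K[X]).rootMultiplicity a = (l.map fun b : S => (b : K[X]).rootMultiplicity a).sum := by
  obtain ⟨r, hr, hx⟩ := h.exists_coe_eq_C_mul_prod
  rw [hx, rootMultiplicity_mul
      (mul_ne_zero (C_ne_zero.2 hr) (List.prod_ne_zero h.zero_notMem_map_val)),
    rootMultiplicity_C, zero_add, rootMultiplicity_list_prod h.zero_notMem_map_val, List.map_map]
  rfl

end Subalgebra

theorem coeff_one_eq_zero_of_mem_Qx2x3 {p : ℚ[X]} (hp : p ∈ Qx2x3) : p.coeff 1 = 0 := by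
  induction hp using Algebra.adjoin_induction with
  | mem p hp => rcases hp with rfl | rfl <;> simp [coeff_X_pow]
  | algebraMap r => simp [algebraMap_eq]
  | add p q _ _ hp hq => simp [hp, hq]
  | mul p q _ _ hp hq => simp [coeff_mul, Finset.Nat.antidiagonal_succ, hp, hq]

theorem two_le_natDegree_of_nzNonunit {b : Qx2x3} (hb : NzNonunit b) :
    2 ≤ (b : ℚ[X]).natDegree := by
  by_contra! hlt
  interval_cases hd : (b : ℚ[X]).natDegree
  · exact hb.2 (isUnit_of_natDegree_coe_eq_zero hb.1 hd)
  · have hlc := leadingCoeff_ne_zero.2 (Qx2x3.coe_eq_zero.not.2 hb.1)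
    rw [leadingCoeff, hd, coeff_one_eq_zero_of_mem_Qx2x3 b.2] at hlc
    exact hlc rfl

theorem TauFact.natDegree_coe_eq_length_mul {l : List Qx2x3} {x b : Qx2x3}
    (h : TauFact degRel l x) (hb : b ∈ l) :
    (x : ℚ[X]).natDegree = l.length * (b : ℚ[X]).natDegree := by
  have hdeg : ∀ c ∈ l, (c : ℚ[X]).natDegree = (b : ℚ[X]).natDegree := fun c hc =>
    h.2.2.1.forall_of_forall_of_flip (fun c _ => (rfl : degRel c c)) (h.2.2.1.imp Eq.symm)
      hc hb
  rw [h.natDegree_coe, List.map_congr_left hdeg, List.map_const', List.sum_replicate,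
    smul_eq_mul]

theorem tauIrred_of_natDegree_le_three {b : Qx2x3} (hb : NzNonunit b)
    (h3 : (b : ℚ[X]).natDegree ≤ 3) : TauIrred degRel b := by
  refine ⟨hb, fun l hl => ?_⟩
  obtain ⟨c, hc⟩ := List.exists_mem_of_ne_nil _ hl.1
  have hdeg := hl.natDegree_coe_eq_length_mul hc
  have hc2 := two_le_natDegree_of_nzNonunit (hl.2.1 c hc)
  have hpos := List.length_pos_of_mem hc
  by_contra hne
  have : 2 * 2 ≤ l.length * (c : ℚ[X]).natDegree := Nat.mul_le_mul (by omega) hc2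
  omega

theorem TauFact.length_eq_one_or_three {l : List Qx2x3} {x : Qx2x3} (h : TauFact degRel l x)
    (hx : (x : ℚ[X]).natDegree = 9) :
    l.length = 1 ∨ l.length = 3 ∧ ∀ b ∈ l, (b : ℚ[X]).natDegree = 3 := by
  obtain ⟨c, hc⟩ := List.exists_mem_of_ne_nil _ h.1
  have hc9 := hx ▸ h.natDegree_coe_eq_length_mul hc
  have hc2 := two_le_natDegree_of_nzNonunit (h.2.1 c hc)
  have hle : l.length ≤ 4 := by nlinarith
  interval_cases hn : l.length
  all_goals first
    | omega
    | exact .inr ⟨rfl, fun b hb => by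
        have := h.natDegree_coe_eq_length_mul hb
        rw [hx, hn] at this
        omega⟩

theorem natDegree_X_pow_eight_sub_X_pow_nine : ((X : ℚ[X]) ^ 8 - X ^ 9).natDegree = 9 := by
  compute_degree!

theorem X_pow_eight_sub_X_pow_nine_ne_zero : (X : ℚ[X]) ^ 8 - X ^ 9 ≠ 0 := fun h => by
  simpa [h] using natDegree_X_pow_eight_sub_X_pow_nine

theorem rootMultiplicity_zero_X_pow_eight_sub_X_pow_nine :
    ((X : ℚ[X]) ^ 8 - X ^ 9).rootMultiplicity 0 = 8 := by
  have hfac : (X : ℚ[X]) ^ 8 - X ^ 9 = (X - C 0) ^ 8 * (1 - X) := by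
    rw [C_0, sub_zero]; ring
  rw [hfac, rootMultiplicity_mul (hfac ▸ X_pow_eight_sub_X_pow_nine_ne_zero),
    rootMultiplicity_X_sub_C_pow, rootMultiplicity_eq_zero (by simp)]

theorem rootMultiplicity_one_X_pow_eight_sub_X_pow_nine :
    ((X : ℚ[X]) ^ 8 - X ^ 9).rootMultiplicity 1 = 1 := by
  have hfac : (X : ℚ[X]) ^ 8 - X ^ 9 = -X ^ 8 * (X - C 1) := by
    rw [C_1]; ring
  rw [hfac, rootMultiplicity_mul (hfac ▸ X_pow_eight_sub_X_pow_nine_ne_zero),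
    rootMultiplicity_eq_zero (by simp), rootMultiplicity_X_sub_C_self]

theorem associated_of_rootMultiplicity_zero_eq_three {b g : Qx2x3} (hg : (g : ℚ[X]) = X ^ 3)
    (hb : (b : ℚ[X]).natDegree = 3) (h0 : (b : ℚ[X]).rootMultiplicity 0 = 3) :
    Associated b g := by
  have hb0 : (b : ℚ[X]) ≠ 0 := fun h => by simp [h] at hb
  have h1 : (b : ℚ[X]).rootMultiplicity 1 = 0 := by
    have := rootMultiplicity_add_rootMultiplicity_le_natDegree zero_ne_one hb0
    omega
  have hform := eq_C_leadingCoeff_mul_of_rootMultiplicity_add_eq_natDegree (zero_ne_one' ℚ)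
    (p := b) (by omega)
  rw [h0, h1] at hform
  exact associated_of_coe_eq_C_mul (leadingCoeff_ne_zero.2 hb0) (by rw [hform, hg]; simp)

theorem associated_of_rootMultiplicity_one_eq_one {b a : Qx2x3}
    (ha : (a : ℚ[X]) = X ^ 2 - X ^ 3) (hb : (b : ℚ[X]).natDegree = 3)
    (h0 : (b : ℚ[X]).rootMultiplicity 0 = 2) (h1 : (b : ℚ[X]).rootMultiplicity 1 = 1) :
    Associated b a := by
  have hb0 : (b : ℚ[X]) ≠ 0 := fun h => by simp [h] at hb
  have hform := eq_C_leadingCoeff_mul_of_rootMultiplicity_add_eq_natDegree (zero_ne_one' ℚ)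
    (p := b) (by omega)
  rw [h0, h1] at hform
  refine associated_of_coe_eq_C_mul (neg_ne_zero.2 (leadingCoeff_ne_zero.2 hb0))
    (hform.trans ?_)
  rw [ha, C_0, C_1, sub_zero, pow_one, map_neg]
  ring

theorem rel_associated_of_tauFact_of_natDegree_eq_three {f a g b₁ b₂ b₃ : Qx2x3}
    (hf : (f : ℚ[X]) = X ^ 8 - X ^ 9) (ha : (a : ℚ[X]) = X ^ 2 - X ^ 3) (hg : (g : ℚ[X]) = X ^ 3)
    (hl : TauFact degRel [b₁, b₂, b₃] f) (hdeg : ∀ b ∈ [b₁, b₂, b₃], (b : ℚ[X]).natDegree = 3) :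
    Multiset.Rel Associated (b₁ ::ₘ b₂ ::ₘ b₃ ::ₘ 0) (a ::ₘ g ::ₘ g ::ₘ 0) := by
  have hsum₀ := hl.rootMultiplicity_coe 0
  have hsum₁ := hl.rootMultiplicity_coe 1
  simp only [hf, rootMultiplicity_zero_X_pow_eight_sub_X_pow_nine,
    rootMultiplicity_one_X_pow_eight_sub_X_pow_nine, List.map_cons, List.map_nil, List.sum_cons,
    List.sum_nil, add_zero] at hsum₀ hsum₁
  have hle : ∀ b ∈ [b₁, b₂, b₃],
      (b : ℚ[X]).rootMultiplicity 0 + (b : ℚ[X]).rootMultiplicity 1 ≤ 3 := fun b hb =>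
    hdeg b hb ▸ rootMultiplicity_add_rootMultiplicity_le_natDegree zero_ne_one
      (Qx2x3.coe_eq_zero.not.2 (hl.2.1 b hb).1)
  simp only [List.mem_cons, List.not_mem_nil, or_false, forall_eq_or_imp, forall_eq] at hdeg hle
  have hG := fun (b : Qx2x3) (hb : (b : ℚ[X]).natDegree = 3) =>
    associated_of_rootMultiplicity_zero_eq_three hg hb
  have hA := fun (b : Qx2x3) (hb : (b : ℚ[X]).natDegree = 3) =>
    associated_of_rootMultiplicity_one_eq_one ha hb
  rcases (by omega : (b₁ : ℚ[X]).rootMultiplicity 0 = 2 ∧ (b₁ : ℚ[X]).rootMultiplicity 1 = 1 ∧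
      (b₂ : ℚ[X]).rootMultiplicity 0 = 3 ∧ (b₃ : ℚ[X]).rootMultiplicity 0 = 3 ∨
    (b₂ : ℚ[X]).rootMultiplicity 0 = 2 ∧ (b₂ : ℚ[X]).rootMultiplicity 1 = 1 ∧
      (b₁ : ℚ[X]).rootMultiplicity 0 = 3 ∧ (b₃ : ℚ[X]).rootMultiplicity 0 = 3 ∨
    (b₃ : ℚ[X]).rootMultiplicity 0 = 2 ∧ (b₃ : ℚ[X]).rootMultiplicity 1 = 1 ∧
      (b₁ : ℚ[X]).rootMultiplicity 0 = 3 ∧ (b₂ : ℚ[X]).rootMultiplicity 0 = 3)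
    with ⟨h₀, h₁, h₂, h₃⟩ | ⟨h₀, h₁, h₂, h₃⟩ | ⟨h₀, h₁, h₂, h₃⟩
  · exact .cons (hA _ hdeg.1 h₀ h₁) <| .cons (hG _ hdeg.2.1 h₂) <| .cons (hG _ hdeg.2.2 h₃) .zero
  · rw [Multiset.cons_swap]
    exact .cons (hA _ hdeg.2.1 h₀ h₁) <| .cons (hG _ hdeg.1 h₂) <| .cons (hG _ hdeg.2.2 h₃) .zero
  · rw [Multiset.cons_swap b₂, Multiset.cons_swap b₁]
    exact .cons (hA _ hdeg.2.2 h₀ h₁) <| .cons (hG _ hdeg.1 h₂) <| .cons (hG _ hdeg.2.1 h₃) .zero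

theorem stmt3 (f a g : Qx2x3) (hf : (f : Polynomial ℚ) = X ^ 8 - X ^ 9)
    (ha : (a : Polynomial ℚ) = X ^ 2 - X ^ 3) (hg : (g : Polynomial ℚ) = X ^ 3) :
    TauAtomicFact degRel [a, g, g] f ∧
    ∀ l, TauAtomicFact degRel l f →
      Multiset.Rel Associated (l : Multiset Qx2x3) ([a, g, g] : Multiset Qx2x3) := by
  have hdeg_a : (a : ℚ[X]).natDegree = 3 := by rw [ha]; compute_degree!
  have hdeg_g : (g : ℚ[X]).natDegree = 3 := by rw [hg]; compute_degree!
  have hirr_a := tauIrred_of_natDegree_le_three (nzNonunit_of_natDegree_coe_ne_zero (by omega))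
    hdeg_a.le
  have hirr_g := tauIrred_of_natDegree_le_three (nzNonunit_of_natDegree_coe_ne_zero (by omega))
    hdeg_g.le
  have hfag : (f : ℚ[X]) = a * g * g := by rw [hf, ha, hg]; ring
  have hfact : TauFact degRel [a, g, g] f :=
    ⟨List.cons_ne_nil _ _, by simpa using ⟨hirr_a.1, hirr_g.1⟩, by simp [degRel, hdeg_a, hdeg_g],
      1, Subtype.ext (by simpa [mul_assoc] using hfag)⟩
  refine ⟨⟨hfact, by simpa using ⟨hirr_a, hirr_g⟩⟩, fun l ⟨hl, hirr⟩ => ?_⟩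
  rcases hl.length_eq_one_or_three (hf ▸ natDegree_X_pow_eight_sub_X_pow_nine)
    with h1 | ⟨h3, hdeg⟩
  · obtain ⟨b, rfl⟩ := List.length_eq_one_iff.1 h1
    obtain ⟨-, -, -, u, hu⟩ := hl
    have hbf : Associated b f := ⟨u, by rw [hu, List.prod_singleton, mul_comm]⟩
    simpa using (hirr b (List.mem_singleton_self b)).2 _ (hfact.of_associated hbf.symm)
  · obtain ⟨b₁, b₂, b₃, rfl⟩ := List.length_eq_three.1 h3
    exact rel_associated_of_tauFact_of_natDegree_eq_three hf ha hg hl hdeg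
end

section
/- Let D be a τ-atomic integral domain with τ symmetric, refinable, and associate preserving. If for every x ∈ D^# every vertex a of G_τ(x) satisfies degl(a) < ∞ (degree plus number of loops is finite), then D satisfies τ-ACCP. -/
section TauFactorization

variable {D : Type*} [CommRing D] {τ : D → D → Prop}

theorem TauFact.perm (hsym : TauSymm τ) {l l' : List D} {a : D} (h : TauFact τ l a)
    (hp : l.Perm l') : TauFact τ l' a := by
  obtain ⟨hne, hmem, hpw, u, rfl⟩ := h
  exact ⟨fun h0 => hne (h0 ▸ hp).eq_nil, fun b hb => hmem b (hp.mem_iff.mpr hb),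
    (hp.pairwise_iff fun {x y} => hsym x y).mp hpw, u, by rw [hp.prod_eq]⟩

theorem TauFact.singleton {b : D} (h : NzNonunit b) : TauFact τ [b] b :=
  ⟨by simp, by simpa using h, by simp, 1, by simp⟩

theorem TauFact.dvd_of_mem {l : List D} {a b : D} (h : TauFact τ l a) (hb : b ∈ l) : b ∣ a := by
  obtain ⟨-, -, -, u, rfl⟩ := h
  exact (List.dvd_prod hb).mul_left _

theorem TauFact.nzNonunit [IsDomain D] {l : List D} {a : D} (h : TauFact τ l a) :
    NzNonunit a := by
  obtain ⟨b, hb⟩ := List.exists_mem_of_ne_nil l h.1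
  refine ⟨?_, fun ha => (h.2.1 b hb).2 (isUnit_of_dvd_unit (h.dvd_of_mem hb) ha)⟩
  obtain ⟨-, hmem, -, u, rfl⟩ := h
  exact mul_ne_zero u.ne_zero (List.prod_ne_zero fun h0 => (hmem 0 h0).1 rfl)

theorem TauFact.replace (href : TauRefinable τ) {L₁ L₂ m : List D} {b x : D}
    (h : TauFact τ (L₁ ++ b :: L₂) x) (hm : TauFact τ m b) : TauFact τ (L₁ ++ m ++ L₂) x := by
  have hsingle : ∀ L : List D, (∀ d ∈ L, NzNonunit d) →
      List.Forall₂ (fun d n => TauFact τ n d) L (L.map ([·])) := fun L hL =>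
    List.forall₂_map_right_iff.mpr (List.forall₂_same.mpr fun d hd => .singleton (hL d hd))
  have hF := href x _ _ h <| List.rel_append (hsingle L₁ fun d hd => h.2.1 d (by simp [hd]))
    (.cons hm (hsingle L₂ fun d hd => h.2.1 d (by simp [hd])))
  simpa only [List.flatten_append, List.flatten_cons, ← List.flatMap_def,
    List.flatMap_singleton', List.append_assoc] using hF

theorem TauDvd.trans (href : TauRefinable τ) {c b a : D} (hcb : TauDvd τ c b)
    (hba : TauDvd τ b a) : TauDvd τ c a := by
  obtain ⟨m, hm, hc⟩ := hcb
  obtain ⟨l, hl, hb⟩ := hba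
  obtain ⟨L₁, L₂, rfl⟩ := List.append_of_mem hb
  exact ⟨_, hl.replace href hm, by simp [hc]⟩

theorem tauDvd_of_lt (href : TauRefinable τ) {a : ℕ → D} (ha : ∀ i, TauDvd τ (a (i + 1)) (a i))
    {n i : ℕ} (hni : n < i) : TauDvd τ (a i) (a n) := by
  induction i, hni using Nat.le_induction with
  | base => exact ha n
  | succ i _ ih => exact (ha i).trans href ih

theorem TauFact.exists_cons_append_of_tauDvd (hsym : TauSymm τ) (href : TauRefinable τ)
    {b c x : D} {R : List D} (h : TauFact τ (b :: R) x) (hc : TauDvd τ c b)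
    (hcb : ¬ Associated c b) : ∃ r ≠ [], TauFact τ (c :: (r ++ R)) x := by
  obtain ⟨l, hl, hcl⟩ := hc
  obtain ⟨L₁, L₂, rfl⟩ := List.append_of_mem hcl
  refine ⟨L₁ ++ L₂, fun hnil => hcb ?_, ?_⟩
  · obtain ⟨rfl, rfl⟩ := List.append_eq_nil_iff.mp hnil
    obtain ⟨-, -, -, u, hu⟩ := hl
    exact ⟨u, by simp [hu, mul_comm]⟩
  · refine (TauFact.replace (L₁ := []) href h hl).perm hsym ?_
    simpa only [List.nil_append, List.append_assoc, List.cons_append]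
      using List.perm_middle.append_right R

theorem exists_tauFact_cons_append_of_not_stable (hsym : TauSymm τ) (href : TauRefinable τ)
    {a : ℕ → D} (ha : ∀ i, TauDvd τ (a (i + 1)) (a i))
    (hstab : ∀ n, ∃ i, n ≤ i ∧ ¬ Associated (a i) (a n)) {x : D} {n : ℕ} {R : List D}
    (hR : TauFact τ (a n :: R) x) (k : ℕ) :
    ∃ m S, TauFact τ (a m :: (S ++ R)) x ∧ k ≤ S.length := by
  induction k with
  | zero => exact ⟨n, [], hR, le_rfl⟩
  | succ k ih =>
    obtain ⟨m, S, hS, hk⟩ := ih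
    obtain ⟨i, hmi, hi⟩ := hstab m
    have hlt : m < i := hmi.lt_of_ne fun h => hi (h ▸ .refl _)
    obtain ⟨r, hr, hrS⟩ := hS.exists_cons_append_of_tauDvd hsym href (tauDvd_of_lt href ha hlt) hi
    refine ⟨i, r ++ S, by simpa using hrS, ?_⟩
    have := List.length_pos_iff.mpr hr
    simp only [List.length_append]
    omega

theorem TauFact.atomicFact_flatten_map (href : TauRefinable τ) {At : D → List D}
    (hAt : ∀ b, NzNonunit b → TauAtomicFact τ (At b) b) {L : List D} {x : D}
    (h : TauFact τ L x) : TauAtomicFact τ (L.map At).flatten x := by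
  refine ⟨href x L _ h ?_, fun p hp => ?_⟩
  · exact List.forall₂_map_right_iff.mpr (List.forall₂_same.mpr fun b hb => (hAt b (h.2.1 b hb)).1)
  · obtain ⟨_, hm, hpm⟩ := List.mem_flatten.mp hp
    obtain ⟨b, hb, rfl⟩ := List.mem_map.mp hm
    exact (hAt b (h.2.1 b hb)).2 p hpm

theorem TauAtomicFact.gVert {l : List D} {x p : D} (h : TauAtomicFact τ l x) (hp : p ∈ l) :
    GVert τ x p :=
  ⟨h.2 p hp, l, h.1, hp⟩

end TauFactorization

theorem List.length_le_sum_countP {α β : Type*} (s : Finset β) (Q : β → α → Bool)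
    {m : List α} (h : ∀ e ∈ m, ∃ c ∈ s, Q c e) : m.length ≤ ∑ c ∈ s, m.countP (Q c) := by
  induction m with
  | nil => simp
  | cons e t ih =>
    obtain ⟨c, hc, hQ⟩ := h e (by simp)
    simp only [List.length_cons, List.countP_cons, Finset.sum_add_distrib]
    gcongr
    · exact ih fun e he => h e (by simp [he])
    · exact le_trans (by simp [hQ]) (Finset.single_le_sum (f := fun c => if Q c e then 1 else 0)
        (by simp) hc)

theorem List.length_le_length_flatten_map {α β : Type*} {f : α → List β} {L : List α}
    (h : ∀ a ∈ L, f a ≠ []) : L.length ≤ (L.map f).flatten.length := by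
  rw [List.length_flatten, List.map_map]
  simpa using List.length_le_sum_of_one_le (L.map (List.length ∘ f)) fun i hi => by
    obtain ⟨a, ha, rfl⟩ := List.mem_map.mp hi
    exact List.length_pos_iff.mpr (h a ha)

section DivisorGraph

variable {D : Type*} [CommRing D] {τ : D → D → Prop}

/-- An element associated to no vertex of `G_τ(x)` occurs in no τ-atomic factorization of `x`,
so the loop bound holds for it trivially. -/
theorem gLoopsFinite_of_forall_gVert {x : D} (h : ∀ a, GVert τ x a → GLoopsFinite τ x a)
    (c : D) : GLoopsFinite τ x c := by
  by_cases hc : ∃ b, GVert τ x b ∧ Associated c b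
  · obtain ⟨b, hb, hcb⟩ := hc
    obtain ⟨N, hN⟩ := h b hb
    exact ⟨N, fun l m hl hml hm => hN l m hl hml fun e he => hcb.symm.trans (hm e he)⟩
  · refine ⟨0, fun l m hl hml hm => ?_⟩
    obtain _ | ⟨e, t⟩ := m
    · simp
    · have he : e ∈ l := hml.subset (by simp)
      exact absurd ⟨e, hl.gVert he, hm e (by simp)⟩ hc

theorem exists_length_le_of_mem_tauAtomicFact {x p : D} (hdeg : GDegFinite τ x p)
    (hloops : ∀ c, GLoopsFinite τ x c) :
    ∃ N, ∀ l, TauAtomicFact τ l x → p ∈ l → l.length ≤ N := by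
  classical
  obtain ⟨s, hs⟩ := hdeg
  choose B hB using hloops
  refine ⟨∑ c ∈ insert p s, B c, fun l hl hpl => ?_⟩
  have hcover : ∀ e ∈ l, ∃ c ∈ insert p s, decide (Associated c e) := by
    intro e he
    by_cases hpe : Associated p e
    · exact ⟨p, Finset.mem_insert_self _ _, by simpa using hpe⟩
    · obtain ⟨c, hc, hec⟩ := hs e ⟨hl.gVert hpl, hl.gVert he, hpe, l, hl.1, ⟨p, hpl, .refl p⟩,
        ⟨e, he, .refl e⟩⟩
      exact ⟨c, Finset.mem_insert_of_mem hc, by simpa using hec.symm⟩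
  calc l.length ≤ ∑ c ∈ insert p s, l.countP (fun e => decide (Associated c e)) :=
        List.length_le_sum_countP _ _ hcover
    _ ≤ ∑ c ∈ insert p s, B c := by
        gcongr with c
        rw [List.countP_eq_length_filter]
        exact hB c l _ hl List.filter_sublist fun e he => by simpa using (List.mem_filter.mp he).2

end DivisorGraph

theorem stmt5_general {D : Type*} [CommRing D] [IsDomain D] (τ : D → D → Prop)
    (hsym : TauSymm τ) (href : TauRefinable τ)
    (hatomic : TauAtomic τ)
    (hdegl : ∀ x : D, NzNonunit x → ∀ a, GVert τ x a →
      GDegFinite τ x a ∧ GLoopsFinite τ x a) :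
    TauACCP τ := by
  classical
  intro a ha
  by_contra! hstab
  obtain ⟨At, hAt⟩ : ∃ At : D → List D, ∀ b, NzNonunit b → TauAtomicFact τ (At b) b :=
    ⟨fun b => if h : NzNonunit b then (hatomic b h).choose else [],
      fun b h => by simpa [h] using (hatomic b h).choose_spec⟩
  have hx : NzNonunit (a 0) := (ha 0).elim fun _ ⟨hl, _⟩ => hl.nzNonunit
  obtain ⟨m, R, hR, hR1⟩ :=
    exists_tauFact_cons_append_of_not_stable hsym href ha hstab (R := []) (.singleton hx) 1
  rw [List.append_nil] at hR
  obtain ⟨q, hq⟩ := List.exists_mem_of_length_pos hR1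
  obtain ⟨p, hp⟩ := List.exists_mem_of_ne_nil _ (hAt q (hR.2.1 q (by simp [hq]))).1.1
  have hmem : ∀ n S, p ∈ ((a n :: (S ++ R)).map At).flatten := fun n S =>
    List.mem_flatten.mpr ⟨At q, List.mem_map.mpr ⟨q, by simp [hq], rfl⟩, hp⟩
  have hpx : GVert τ (a 0) p := (hR.atomicFact_flatten_map href hAt).gVert (hmem m [])
  obtain ⟨N, hN⟩ := exists_length_le_of_mem_tauAtomicFact (hdegl _ hx p hpx).1
    (gLoopsFinite_of_forall_gVert fun b hb => (hdegl _ hx b hb).2)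
  obtain ⟨n, S, hS, hSN⟩ := exists_tauFact_cons_append_of_not_stable hsym href ha hstab hR N
  have hle := hN _ (hS.atomicFact_flatten_map href hAt) (hmem n S)
  have hge := List.length_le_length_flatten_map fun b hb => (hAt b (hS.2.1 b hb)).1.1
  simp only [List.length_cons, List.length_append] at hge
  omega

theorem stmt5 {D : Type*} [CommRing D] [IsDomain D] (τ : D → D → Prop)
    (hsym : TauSymm τ) (href : TauRefinable τ) (hap : TauAssocPres τ)
    (hatomic : TauAtomic τ)
    (hdegl : ∀ x : D, NzNonunit x → ∀ a, GVert τ x a →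
      GDegFinite τ x a ∧ GLoopsFinite τ x a) :
    TauACCP τ :=
  stmt5_general τ hsym href hatomic hdegl
end

section
/- Let D be a τ-atomic integral domain with τ symmetric, reflexive, refinable, and associate preserving. If for every x ∈ D^# every vertex of G_τ(x) has finite degree (finitely many adjacent vertices, loops not counted), then D is a τ-idf domain, i.e., every x ∈ D^# has only finitely many τ-irreducible τ-divisors up to associates. -/
theorem stmt12 {D : Type*} [CommRing D] [IsDomain D] (τ : D → D → Prop)
    (hrefl : ∀ a : D, NzNonunit a → τ a a)
    (hsym : TauSymm τ) (href : TauRefinable τ) (hap : TauAssocPres τ)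
    (hatomic : TauAtomic τ)
    (hdeg : ∀ x : D, NzNonunit x → ∀ a, GVert τ x a → GDegFinite τ x a) :
    TauIdf τ := by
  classical
  intro x hx
  obtain ⟨l₀, hl₀f, hl₀irr⟩ := hatomic x hx
  have hx2 : NzNonunit (x * x) :=
    ⟨mul_ne_zero hx.1 hx.1, fun h => hx.2 (isUnit_of_mul_isUnit_left h)⟩
  have combine : ∀ l m : List D, TauFact τ l x → TauFact τ m x →
      TauFact τ (l ++ m) (x * x) := by
    intro l m hl hm
    have h2 : TauFact τ [x, x] (x * x) := by
      refine ⟨by simp, ?_, ?_, 1, by simp⟩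
      · intro b hb
        rcases List.mem_cons.1 hb with rfl | hb
        · exact hx
        · rcases List.mem_singleton.1 hb with rfl; exact hx
      · refine List.Pairwise.cons ?_ (List.pairwise_singleton τ x)
        intro b hb; rcases List.mem_singleton.1 hb with rfl; exact hrefl _ hx
    have hF : List.Forall₂ (fun b m => TauFact τ m b) [x, x] [l, m] :=
      List.Forall₂.cons hl (List.Forall₂.cons hm List.Forall₂.nil)
    have := href (x * x) [x, x] [l, m] h2 hF
    simpa using this
  obtain ⟨a₀, ha₀⟩ := List.exists_mem_of_ne_nil l₀ hl₀f.1
  have ha₀irr : TauIrred τ a₀ := hl₀irr a₀ ha₀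
  have ha₀vert : GVert τ (x * x) a₀ :=
    ⟨ha₀irr, ⟨l₀ ++ l₀, combine l₀ l₀ hl₀f hl₀f, List.mem_append_left _ ha₀⟩⟩
  obtain ⟨s, hs⟩ := hdeg (x * x) hx2 a₀ ha₀vert
  refine ⟨insert a₀ s, ?_⟩
  intro b hbirr hbdvd
  obtain ⟨m, hmfact, hbm⟩ := hbdvd
  by_cases hassoc : Associated b a₀
  · exact ⟨a₀, Finset.mem_insert_self _ _, hassoc⟩
  · have hadj : GAdj τ (x * x) a₀ b := by
      refine ⟨ha₀vert,
        ⟨hbirr, ⟨l₀ ++ m, combine l₀ m hl₀f hmfact, List.mem_append_right _ hbm⟩⟩,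
        fun h => hassoc h.symm,
        l₀ ++ m, combine l₀ m hl₀f hmfact,
        ⟨a₀, List.mem_append_left _ ha₀, Associated.refl a₀⟩,
        ⟨b, List.mem_append_right _ hbm, Associated.refl b⟩⟩
    obtain ⟨c, hc, hbc⟩ := hs b hadj
    exact ⟨c, Finset.mem_insert_of_mem hc, hbc⟩
end

section
/- Let D be a τ-atomic integral domain with τ symmetric, refinable, and associate preserving. D is a τ-weak finite factorization domain if and only if D is a τ-idf domain. -/
/-! Refining a τ-factorization of `x` through one of its factors `b` into τ-atoms exhibits `b`,
up to associates, as a sub-product of a τ-atomic factorization of `x`. Replacing each atom by a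
representative of its associate class among the finitely many τ-irreducible τ-divisors of `x`
turns these factorizations into multisets over a finite set with product associated to `x`.
They form an antichain, since enlarging such a multiset multiplies `x` by a nonunit, so by
Dickson's lemma there are finitely many of them, hence finitely many sub-products. -/

section Monoid

variable {ι M : Type*}

theorem exists_multiset_prod_map_associated [CommMonoid M] {s : Set M} (L : Multiset M)
    (hL : ∀ e ∈ L, ∃ c ∈ s, Associated e c) :
    ∃ m : Multiset s, Associated L.prod (m.map (↑)).prod := by
  induction L using Multiset.induction_on with
  | empty => exact ⟨0, by simp⟩
  | cons a L ih =>
    obtain ⟨c, hc, hac⟩ := hL a (Multiset.mem_cons_self a L)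
    obtain ⟨m, hm⟩ := ih fun e he => hL e (Multiset.mem_cons_of_mem he)
    exact ⟨⟨c, hc⟩ ::ₘ m, by simpa using hac.mul_mul hm⟩

variable [CommMonoidWithZero M] [IsCancelMulZero M]

theorem isAntichain_setOf_prod_map_associated {f : ι → M} (hf : ∀ i, ¬IsUnit (f i)) {x : M}
    (hx : x ≠ 0) : IsAntichain (· ≤ ·) {m : Multiset ι | Associated (m.map f).prod x} := by
  intro m hm m' hm' hne hle
  obtain ⟨d, rfl⟩ := Multiset.le_iff_exists_add.mp hle
  have hm0 : (m.map f).prod ≠ 0 := fun h0 => hx (hm.eq_zero_iff.mp h0)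
  have hd : IsUnit (d.map f).prod := by
    refine isUnit_of_associated_mul ?_ hm0
    rw [← Multiset.prod_add, ← Multiset.map_add]
    exact hm'.trans hm.symm
  obtain rfl : d = 0 := Multiset.eq_zero_of_forall_notMem fun i hi =>
    hf i (isUnit_of_dvd_unit (Multiset.dvd_prod (Multiset.mem_map_of_mem f hi)) hd)
  exact hne (add_zero m).symm

theorem finite_setOf_prod_map_associated [Finite ι] {f : ι → M} (hf : ∀ i, ¬IsUnit (f i))
    {x : M} (hx : x ≠ 0) : {m : Multiset ι | Associated (m.map f).prod x}.Finite := by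
  classical
  have : WellQuasiOrderedLE (Multiset ι) :=
    Finsupp.orderIsoMultiset.wellQuasiOrderedLE_iff.mp inferInstance
  exact WellQuasiOrderedLE.finite_of_isAntichain (isAntichain_setOf_prod_map_associated hf hx)

theorem exists_finset_associated_prod_of_le (t : Finset M) (ht : ∀ c ∈ t, ¬IsUnit c) {x : M}
    (hx : x ≠ 0) :
    ∃ S : Finset M, ∀ L k : Multiset M, (∀ e ∈ L, ∃ c ∈ t, Associated e c) →
      Associated L.prod x → k ≤ L → ∃ c ∈ S, Associated k.prod c := by
  classical
  have hZ := finite_setOf_prod_map_associated (f := fun c : (t : Set M) => (c : M))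
    (fun c => ht c c.2) hx
  refine ⟨hZ.toFinset.biUnion fun m => m.powerset.toFinset.image fun m₁ => (m₁.map (↑)).prod,
    fun L k hL hLx hkL => ?_⟩
  obtain ⟨r, rfl⟩ := Multiset.le_iff_exists_add.mp hkL
  obtain ⟨m₁, hm₁⟩ := exists_multiset_prod_map_associated (s := (t : Set M)) k
    fun e he => hL e (Multiset.mem_add.2 (Or.inl he))
  obtain ⟨m₂, hm₂⟩ := exists_multiset_prod_map_associated (s := (t : Set M)) r
    fun e he => hL e (Multiset.mem_add.2 (Or.inr he))
  have hm : Associated ((m₁ + m₂).map (↑)).prod x := by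
    rw [Multiset.map_add, Multiset.prod_add]
    rw [Multiset.prod_add] at hLx
    exact (hm₁.mul_mul hm₂).symm.trans hLx
  exact ⟨_, Finset.mem_biUnion.2 ⟨_, hZ.mem_toFinset.2 hm,
    Finset.mem_image.2 ⟨m₁, by simp, rfl⟩⟩, hm₁⟩

end Monoid

section Tau

variable {D : Type*} [CommRing D] {τ : D → D → Prop}

theorem TauFact.associated_prod {l : List D} {a : D} (h : TauFact τ l a) :
    Associated l.prod a :=
  let ⟨u, hu⟩ := h.2.2.2
  ⟨u, by rw [hu, mul_comm]⟩

theorem TauDvd.exists_tauAtomicFact_sublist (href : TauRefinable τ) (hatomic : TauAtomic τ)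
    {b x : D} (h : TauDvd τ b x) :
    ∃ L k : List D, TauAtomicFact τ L x ∧ k.Sublist L ∧ Associated k.prod b := by
  obtain ⟨l, hl, hbl⟩ := h
  choose! g hg using hatomic
  have hgl : ∀ c ∈ l, TauAtomicFact τ (g c) c := fun c hc => hg c (hl.2.1 c hc)
  refine ⟨(l.map g).flatten, g b, ⟨href x l _ hl ?_, ?_⟩,
    List.sublist_flatten_of_mem (List.mem_map_of_mem hbl), (hgl b hbl).1.associated_prod⟩
  · rw [List.forall₂_map_right_iff, List.forall₂_same]
    exact fun c hc => (hgl c hc).1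
  · simp only [List.mem_flatten, List.mem_map]
    rintro e ⟨_, ⟨c, hc, rfl⟩, he⟩
    exact (hgl c hc).2 e he

theorem TauWFFD.tauIdf (h : TauWFFD τ) : TauIdf τ :=
  fun x hx => (h x hx).imp fun _ hs b _ => hs b

end Tau

theorem stmt13_general {D : Type*} [CommRing D] [IsDomain D] (τ : D → D → Prop)
    (href : TauRefinable τ) (hatomic : TauAtomic τ) :
    TauWFFD τ ↔ TauIdf τ := by
  classical
  refine ⟨TauWFFD.tauIdf, fun hidf x hx => ?_⟩
  obtain ⟨s, hs⟩ := hidf x hx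
  obtain ⟨S, hS⟩ := exists_finset_associated_prod_of_le (s.filter (¬IsUnit ·))
    (fun c hc => (Finset.mem_filter.1 hc).2) hx.1
  refine ⟨S, fun b hb => ?_⟩
  obtain ⟨L, k, hL, hkL, hkb⟩ := hb.exists_tauAtomicFact_sublist href hatomic
  have hcover : ∀ e ∈ (L : Multiset D), ∃ c ∈ s.filter (¬IsUnit ·), Associated e c := by
    intro e he
    have heL : e ∈ L := Multiset.mem_coe.1 he
    obtain ⟨c, hc, hec⟩ := hs e (hL.2 e heL) ⟨L, hL.1, heL⟩
    exact ⟨c, Finset.mem_filter.2 ⟨hc, fun hu => (hL.2 e heL).1.2 (hec.isUnit_iff.2 hu)⟩, hec⟩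
  obtain ⟨c, hc, hkc⟩ := hS L k hcover (by simpa using hL.1.associated_prod)
    (Multiset.coe_le.2 hkL.subperm)
  exact ⟨c, hc, hkb.symm.trans (by simpa using hkc)⟩

theorem stmt13 {D : Type*} [CommRing D] [IsDomain D] (τ : D → D → Prop)
    (hsym : TauSymm τ) (href : TauRefinable τ) (hap : TauAssocPres τ)
    (hatomic : TauAtomic τ) :
    TauWFFD τ ↔ TauIdf τ :=
  stmt13_general τ href hatomic
end

section
/- Let D = ℚ[x², x³] and let τ be the symmetric relation on D^# given by equality of degree. Then x⁵ is τ-irreducible but not irreducible, and x⁴ − x³ is irreducible (hence τ-irreducible) of composite degree. -/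
open Polynomial

lemma coeff_one_eq_zero {g : Polynomial ℚ} (hg : g ∈ Qx2x3) : g.coeff 1 = 0 := by
  have : Qx2x3 ≤ {
      carrier := {p : Polynomial ℚ | p.coeff 1 = 0}
      mul_mem' := by
        intro a b ha hb
        simp only [Set.mem_setOf_eq] at *
        rw [coeff_mul, Finset.Nat.sum_antidiagonal_eq_sum_range_succ_mk]
        simp [Finset.sum_range_succ, ha, hb]
      add_mem' := by intro a b ha hb; simp only [Set.mem_setOf_eq] at *; simp [ha, hb]
      algebraMap_mem' := by intro r; simp [Set.mem_setOf_eq, algebraMap_eq, coeff_C]  } := by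
    apply Algebra.adjoin_le
    rintro p (rfl | rfl)
    · show ((X:ℚ[X]) ^ 2).coeff 1 = 0; simp [coeff_X_pow]
    · show ((X:ℚ[X]) ^ 3).coeff 1 = 0; simp [coeff_X_pow]
  exact this hg

lemma x2_mem : (X:ℚ[X])^2 ∈ Qx2x3 := Algebra.subset_adjoin (by simp)
lemma x3_mem : (X:ℚ[X])^3 ∈ Qx2x3 := Algebra.subset_adjoin (by simp)

lemma isUnit_iff' (a : Qx2x3) : IsUnit a ↔ IsUnit (a : ℚ[X]) := by
  constructor
  · intro h; exact h.map Qx2x3.val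
  · intro h
    obtain ⟨c, hc, hac⟩ := Polynomial.isUnit_iff.mp h
    refine IsUnit.of_mul_eq_one (a := a) (algebraMap ℚ Qx2x3 c⁻¹) ?_
    apply Subtype.ext
    simp only [MulMemClass.coe_mul, OneMemClass.coe_one, SetLike.coe_eq_coe]
    rw [show ((algebraMap ℚ Qx2x3 c⁻¹ : Qx2x3) : ℚ[X]) = C c⁻¹ from rfl, ← hac, ← C_mul,
      mul_inv_cancel₀ hc.ne_zero, C_1]

lemma deg_ge_two {a : Qx2x3} (h : NzNonunit a) : 2 ≤ (a : ℚ[X]).natDegree := by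
  obtain ⟨h0, hu⟩ := h
  have hA0 : (a : ℚ[X]) ≠ 0 := fun hh => h0 (Subtype.ext hh)
  have hAu : ¬ IsUnit (a : ℚ[X]) := fun hh => hu ((isUnit_iff' a).mpr hh)
  rcases Nat.lt_or_ge (a : ℚ[X]).natDegree 2 with hd | hd
  · interval_cases hdeg : (a : ℚ[X]).natDegree
    · exfalso
      apply hAu
      rw [eq_C_of_natDegree_eq_zero hdeg]
      refine isUnit_C.mpr (isUnit_iff_ne_zero.mpr fun hc => hA0 ?_)
      rw [eq_C_of_natDegree_eq_zero hdeg, hc, C_0]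
    · exfalso
      have h1 : (a : ℚ[X]).coeff 1 = 0 := coeff_one_eq_zero a.2
      have hl := Polynomial.leadingCoeff_ne_zero.mpr hA0
      rw [leadingCoeff, hdeg] at hl
      exact hl h1
  · exact hd

lemma irred_tauIrred {D : Type*} [CommRing D] {τ : D → D → Prop} {a : D}
    (hnz : NzNonunit a) (h : Irreducible a) : TauIrred τ a := by
  refine ⟨hnz, fun l hl => ?_⟩
  obtain ⟨hne, hb, _, u, hu⟩ := hl
  match l with
  | [] => exact absurd rfl hne
  | [b] => rfl
  | b :: c :: t =>
    exfalso
    rw [List.prod_cons, ← mul_assoc] at hu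
    rcases h.isUnit_or_isUnit hu with h1 | h2
    · exact (hb b (by simp)).2 (by
        have : b = (↑u⁻¹ : D) * ((u : D) * b) := by rw [← mul_assoc]; simp
        rw [this]; exact (Units.isUnit u⁻¹).mul h1)
    · have hc : (c : D) ∣ (c :: t).prod := List.dvd_prod (by simp)
      exact (hb c (by simp)).2 (isUnit_of_dvd_unit hc h2)

lemma coe_list_prod (l : List Qx2x3) :
    ((l.prod : Qx2x3) : ℚ[X]) = (l.map (fun c : Qx2x3 => (c : ℚ[X]))).prod := by
  induction l with
  | nil => simp
  | cons b t ih => simp [ih]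

lemma natdeg_prod (l : List Qx2x3) (h : ∀ b ∈ l, (b : ℚ[X]) ≠ 0) :
    ((l.prod : Qx2x3) : ℚ[X]).natDegree = (l.map (fun b : Qx2x3 => (b : ℚ[X]).natDegree)).sum := by
  induction l with
  | nil => simp
  | cons b t ih =>
    have hb : (b : ℚ[X]) ≠ 0 := h b (by simp)
    have ht : ∀ c ∈ t, (c : ℚ[X]) ≠ 0 := fun c hc => h c (by simp [hc])
    have htp : ((t.prod : Qx2x3) : ℚ[X]) ≠ 0 := by
      rw [coe_list_prod]
      refine List.prod_ne_zero fun h0 => ?_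
      obtain ⟨c, hc, hcc⟩ := List.mem_map.mp h0
      exact ht c hc hcc
    have hcoe : ((b * t.prod : Qx2x3) : ℚ[X]) = (b : ℚ[X]) * ((t.prod : Qx2x3) : ℚ[X]) := rfl
    rw [List.prod_cons, hcoe, natDegree_mul hb htp, ih ht, List.map_cons, List.sum_cons]

lemma tauFact_deg {l : List Qx2x3} {a : Qx2x3} (h : TauFact degRel l a) :
    ∃ d, 2 ≤ d ∧ (a : ℚ[X]).natDegree = l.length * d := by
  obtain ⟨hne, hb, hpw, u, hu⟩ := h
  match l, hne with
  | hd :: t, _ =>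
    refine ⟨(hd : ℚ[X]).natDegree, deg_ge_two (hb hd (by simp)), ?_⟩
    have hall : ∀ b ∈ hd :: t, (b : ℚ[X]).natDegree = (hd : ℚ[X]).natDegree := by
      intro b hbm
      rcases List.mem_cons.mp hbm with rfl | hbt
      · rfl
      · exact ((List.pairwise_cons.mp hpw).1 b hbt).symm
    have hnz : ∀ b ∈ hd :: t, (b : ℚ[X]) ≠ 0 := by
      intro b hbm hb0
      exact (hb b hbm).1 (Subtype.ext hb0)
    have hU : ((u : Qx2x3) : ℚ[X]) ≠ 0 := ((isUnit_iff' _).mp u.isUnit).ne_zero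
    have hP : (((hd :: t).prod : Qx2x3) : ℚ[X]) ≠ 0 := by
      rw [coe_list_prod]
      refine List.prod_ne_zero fun h0 => ?_
      obtain ⟨c, hc, hcc⟩ := List.mem_map.mp h0
      exact hnz c hc hcc
    have hcoe : ((a : Qx2x3) : ℚ[X]) = ((u:Qx2x3) : ℚ[X]) * (((hd :: t).prod : Qx2x3) : ℚ[X]) := by
      rw [hu]; rfl
    rw [hcoe, natDegree_mul hU hP,
      natDegree_eq_zero_of_isUnit ((isUnit_iff' _).mp u.isUnit), zero_add,
      natdeg_prod _ hnz,
      List.sum_eq_card_nsmul _ ((hd : ℚ[X]).natDegree) (by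
        intro x hx
        obtain ⟨c, hc, rfl⟩ := List.mem_map.mp hx
        exact hall c hc)]
    simp [mul_comm]


theorem stmt16 (p q : Qx2x3) (hp : (p : Polynomial ℚ) = X ^ 5)
    (hq : (q : Polynomial ℚ) = X ^ 4 - X ^ 3) :
    (TauIrred degRel p ∧ ¬ Irreducible p) ∧
    (Irreducible q ∧ TauIrred degRel q ∧ ¬ Nat.Prime (q : Polynomial ℚ).natDegree) := by
  have nzn_of_deg : ∀ (a : Qx2x3), 1 ≤ (a : ℚ[X]).natDegree → NzNonunit a := by
    intro a ha
    constructor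
    · intro h0
      rw [h0] at ha
      simp [ZeroMemClass.coe_zero] at ha
    · intro hu
      have := natDegree_eq_zero_of_isUnit ((isUnit_iff' a).mp hu)
      omega
  have hp5 : ((p : ℚ[X])).natDegree = 5 := by rw [hp]; simp
  have hq4 : ((q : ℚ[X])).natDegree = 4 := by rw [hq]; compute_degree!
  have hpnz : NzNonunit p := nzn_of_deg p (by omega)
  have hqnz : NzNonunit q := nzn_of_deg q (by omega)
  have hqirr : Irreducible q := by
    constructor
    · intro hu
      have := natDegree_eq_zero_of_isUnit ((isUnit_iff' q).mp hu)
      omega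
    · intro a b hab
      by_contra hcon
      push_neg at hcon
      obtain ⟨hua, hub⟩ := hcon
      have habc : (q : ℚ[X]) = (a : ℚ[X]) * (b : ℚ[X]) := by rw [hab]; rfl
      have hq0 : (q : ℚ[X]) ≠ 0 := fun h => by rw [h] at hq4; simp at hq4
      have ha0 : (a : ℚ[X]) ≠ 0 := fun h => hq0 (by rw [habc, h, zero_mul])
      have hb0 : (b : ℚ[X]) ≠ 0 := fun h => hq0 (by rw [habc, h, mul_zero])
      have hda := deg_ge_two ⟨fun h => ha0 (by rw [h]; rfl), hua⟩
      have hdb := deg_ge_two ⟨fun h => hb0 (by rw [h]; rfl), hub⟩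
      have hsum : (a : ℚ[X]).natDegree + (b : ℚ[X]).natDegree = 4 := by
        rw [← hq4, habc, natDegree_mul ha0 hb0]
      have hda2 : (a : ℚ[X]).natDegree = 2 := by omega
      have hdb2 : (b : ℚ[X]).natDegree = 2 := by omega
      have cA1 : (a : ℚ[X]).coeff 1 = 0 := coeff_one_eq_zero a.2
      have cB1 : (b : ℚ[X]).coeff 1 = 0 := coeff_one_eq_zero b.2
      have cA3 : (a : ℚ[X]).coeff 3 = 0 := coeff_eq_zero_of_natDegree_lt (by omega)
      have cB3 : (b : ℚ[X]).coeff 3 = 0 := coeff_eq_zero_of_natDegree_lt (by omega)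
      have hco : ((a : ℚ[X]) * (b : ℚ[X])).coeff 3 = 0 := by
        rw [coeff_mul, Finset.Nat.sum_antidiagonal_eq_sum_range_succ_mk]
        simp [Finset.sum_range_succ, cA1, cB1, cA3, cB3]
      rw [← habc, hq] at hco
      simp [coeff_sub, coeff_X_pow] at hco
  refine ⟨⟨⟨hpnz, ?_⟩, ?_⟩, hqirr, irred_tauIrred hqnz hqirr, ?_⟩
  · intro l hl
    obtain ⟨d, hd2, hdeg⟩ := tauFact_deg hl
    rw [hp5] at hdeg
    have hdvd : d ∣ 5 := ⟨l.length, by rw [hdeg, mul_comm]⟩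
    have := (Nat.prime_iff.mp (by norm_num : Nat.Prime 5)).2
    rcases (by norm_num : Nat.Prime 5).eq_one_or_self_of_dvd d hdvd with rfl | rfl
    · omega
    · omega
  · intro hirr
    set a2 : Qx2x3 := ⟨X ^ 2, x2_mem⟩ with ha2
    set a3 : Qx2x3 := ⟨X ^ 3, x3_mem⟩ with ha3
    have hp23 : p = a2 * a3 := Subtype.ext (by
      show (p : ℚ[X]) = X ^ 2 * X ^ 3
      rw [hp]; ring)
    rcases hirr.isUnit_or_isUnit hp23 with h | h
    · have := natDegree_eq_zero_of_isUnit ((isUnit_iff' a2).mp h)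
      simp [ha2] at this
    · have := natDegree_eq_zero_of_isUnit ((isUnit_iff' a3).mp h)
      simp [ha3] at this
  · rw [hq4]; norm_num
end
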